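/- Let P be a hereditary graph class, let G be a finite connected graph that does not belong to P, and let Z be a nonempty set of vertices of G such that every forbidden set X of G contains Z and the induced subgraph G[X] is biconnected. Then for every set S ⊆ V(G) with Z ⊆ S and G[S] connected: S is a maximal connected P set of G if and only if V(G) \ N(S) is a maximal P set of G, where N(S) denotes the set of vertices outside S having a neighbor in S. -/

import Mathlib

attribute [local instance] Classical.propDecidable

/-- A *graph class*: a collection of finite simple graphs, given as a property of
simple graphs over every finite vertex type. -/
abbrev GraphClass : Type 1 :=
  ∀ (V : Type) [Fintype V], SimpleGraph V → Prop

/-- The graph class is a nonempty collection of graphs. -/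
def GraphClass.NonemptyClass (P : GraphClass) : Prop :=
  ∃ (V : Type) (_ : Fintype V) (G : SimpleGraph V), P V G

/-- The graph class is closed under isomorphism. -/
def GraphClass.IsoClosed (P : GraphClass) : Prop :=
  ∀ (V W : Type) (_ : Fintype V) (_ : Fintype W) (G : SimpleGraph V) (H : SimpleGraph W),
    _root_.Nonempty (G ≃g H) → (P V G ↔ P W H)

/-- The graph class is hereditary: it is closed under taking induced subgraphs. -/
def GraphClass.Hereditary (P : GraphClass) : Prop :=
  ∀ (V : Type) (_ : Fintype V) (G : SimpleGraph V) (S : Set V),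
    P V G → P (↥S) (G.induce S)

variable {V : Type} [Fintype V]

/-- `S ⊆ V(G)` is a `P` set of `G` if the induced subgraph `G[S]` belongs to `P`. -/
def IsPSet (P : GraphClass) (G : SimpleGraph V) (S : Set V) : Prop :=
  P (↥S) (G.induce S)

/-- `S` is a maximal `P` set of `G`: a `P` set with no proper superset that is a `P` set. -/
def IsMaxPSet (P : GraphClass) (G : SimpleGraph V) (S : Set V) : Prop :=
  IsPSet P G S ∧ ∀ T : Set V, S ⊂ T → ¬ IsPSet P G T

/-- `S` is a connected `P` set of `G`: a `P` set inducing a connected subgraph. -/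
def IsConnPSet (P : GraphClass) (G : SimpleGraph V) (S : Set V) : Prop :=
  IsPSet P G S ∧ (G.induce S).Connected

/-- `S` is a maximal connected `P` set of `G`: a connected `P` set contained in no
strictly larger connected `P` set. -/
def IsMaxConnPSet (P : GraphClass) (G : SimpleGraph V) (S : Set V) : Prop :=
  IsConnPSet P G S ∧ ∀ T : Set V, S ⊂ T → ¬ IsConnPSet P G T

/-- A forbidden set of `G` (with respect to the class `P`): an inclusion-minimal vertex
set inducing a subgraph that is not in `P`. -/
def IsForbiddenSet (P : GraphClass) (G : SimpleGraph V) (X : Set V) : Prop :=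
  ¬ IsPSet P G X ∧ ∀ Y : Set V, Y ⊂ X → IsPSet P G Y

/-- A finite graph is biconnected if it is connected and remains connected after the
deletion of any single vertex. -/
def IsBiconnected {W : Type} (H : SimpleGraph W) : Prop :=
  H.Connected ∧ ∀ w : W, (H.induce {x | x ≠ w}).Connected

/-- The neighborhood `N(S)` of a vertex set `S`: all vertices outside `S` having a
neighbor in `S`. -/
def setNbhd {V : Type} (G : SimpleGraph V) (S : Set V) : Set V :=
  {x | x ∉ S ∧ ∃ s ∈ S, G.Adj x s}

/-
Write `W = V(G) \ N(S)`. A connected set meeting `S` and avoiding `N(S)` lies inside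
`S`. Every forbidden set contains `Z ⊆ S` and is connected, so a forbidden set inside `W` would lie
inside the `P` set `S`; hence `W` is a `P` set as soon as `S` is. Conversely, if `W` is a maximal `P`
set and `T ⊋ S` is connected, then `T` contains some `u ∈ N(S)`, and `W ∪ {u}` contains a forbidden
set `X` through `u`. As `G[X]` is biconnected, `X \ {u}` is still connected, contains `Z` and avoids
`N(S)`, so `X ⊆ S ∪ {u} ⊆ T` and `T` is not a `P` set.
-/

namespace SimpleGraph

variable {V : Type} (G : SimpleGraph V)

def induceInduceIso {s t : Set V} (h : s ⊆ t) :
    (G.induce t).induce (Subtype.val ⁻¹' s) ≃g G.induce s where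
  toFun x := ⟨x.1.1, x.2⟩
  invFun y := ⟨⟨y.1, h y.2⟩, y.2⟩
  left_inv _ := rfl
  right_inv _ := rfl
  map_rel_iff' := Iff.rfl

variable {G}

lemma connected_induce_insert {S : Set V} (hS : (G.induce S).Connected) {u s : V} (hs : s ∈ S)
    (hadj : G.Adj u s) : (G.induce (insert u S)).Connected := by
  rw [← Set.singleton_union]
  exact connected_induce_union Preconnected.of_subsingleton hS.preconnected rfl hs hadj

lemma connected_induce_diff_singleton_of_isBiconnected {X : Set V}
    (hX : IsBiconnected (G.induce X)) {u : V} (hu : u ∈ X) :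
    (G.induce (X \ {u})).Connected := by
  have hdel : {x : X | x ≠ ⟨u, hu⟩} = Subtype.val ⁻¹' (X \ {u}) := by
    ext x
    simp [Subtype.ext_iff]
  exact (G.induceInduceIso Set.sdiff_subset).connected_iff.mp (hdel ▸ hX.2 ⟨u, hu⟩)

lemma subset_compl_setNbhd (S : Set V) : S ⊆ (setNbhd G S)ᶜ :=
  fun _ hx hN => hN.1 hx

lemma subset_of_connected_of_subset_compl_setNbhd {S X : Set V} (hX : (G.induce X).Connected)
    (hXS : (X ∩ S).Nonempty) (hXN : X ⊆ (setNbhd G S)ᶜ) : X ⊆ S := by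
  obtain ⟨a, haX, haS⟩ := hXS
  intro x hxX
  by_contra hxS
  obtain ⟨w⟩ := hX ⟨a, haX⟩ ⟨x, hxX⟩
  obtain ⟨d, -, hfst, hsnd⟩ := w.exists_boundary_dart (Subtype.val ⁻¹' S) haS hxS
  exact hXN d.snd.2 ⟨hsnd, d.fst, hfst, d.adj.symm⟩

lemma exists_mem_setNbhd_of_ssubset {S T : Set V} (hS : S.Nonempty)
    (hT : (G.induce T).Connected) (hST : S ⊂ T) : ∃ u ∈ T, u ∈ setNbhd G S := by
  by_contra! h
  obtain ⟨s, hs⟩ := hS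
  exact hST.not_subset <|
    subset_of_connected_of_subset_compl_setNbhd hT ⟨s, hST.subset hs, hs⟩ h

end SimpleGraph

open SimpleGraph

variable {P : GraphClass} {G : SimpleGraph V}

lemma GraphClass.IsoClosed.isPSet_mono (hiso : P.IsoClosed) (hher : P.Hereditary)
    {T T' : Set V} (h : T ⊆ T') (hT' : IsPSet P G T') : IsPSet P G T :=
  (hiso _ _ _ _ _ _ ⟨G.induceInduceIso h⟩).mp (hher _ _ _ _ hT')

lemma exists_isForbiddenSet_subset {T : Set V} (hT : ¬ IsPSet P G T) :
    ∃ X ⊆ T, IsForbiddenSet P G X := by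
  obtain ⟨X, hXT, hX⟩ := exists_minimal_le_of_wellFoundedLT (fun Y => ¬ IsPSet P G Y) T hT
  exact ⟨X, hXT, hX.prop, fun Y hY => not_not.mp (hX.not_prop_of_lt hY)⟩

lemma IsForbiddenSet.not_subset_of_isPSet (hiso : P.IsoClosed) (hher : P.Hereditary)
    {X T : Set V} (hX : IsForbiddenSet P G X) (hT : IsPSet P G T) : ¬ X ⊆ T :=
  fun hXT => hX.1 (hiso.isPSet_mono hher hXT hT)

section ForbiddenSetsThroughZ

variable (hiso : P.IsoClosed) (hher : P.Hereditary) {Z : Set V} (hZne : Z.Nonempty)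
  (hforb : ∀ X : Set V, IsForbiddenSet P G X → Z ⊆ X ∧ IsBiconnected (G.induce X))
  {S : Set V} (hZS : Z ⊆ S)
include hiso hher hZne hforb hZS

lemma isPSet_compl_setNbhd (hS : IsPSet P G S) : IsPSet P G (setNbhd G S)ᶜ := by
  by_contra hW
  obtain ⟨X, hXW, hX⟩ := exists_isForbiddenSet_subset hW
  obtain ⟨hZX, hXbi⟩ := hforb X hX
  exact hX.not_subset_of_isPSet hiso hher hS <|
    subset_of_connected_of_subset_compl_setNbhd hXbi.1 (hZne.mono (Set.subset_inter hZX hZS)) hXW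

lemma IsForbiddenSet.subset_insert_of_subset_insert_compl_setNbhd
    (hW : IsPSet P G (setNbhd G S)ᶜ) {X : Set V} (hX : IsForbiddenSet P G X) {u : V}
    (huS : u ∉ S) (hXu : X ⊆ insert u (setNbhd G S)ᶜ) : X ⊆ insert u S := by
  have huX : u ∈ X := by
    by_contra huX
    exact hX.not_subset_of_isPSet hiso hher hW (Set.subset_insert_iff_of_notMem huX |>.mp hXu)
  obtain ⟨hZX, hXbi⟩ := hforb X hX
  have hZdel : Z ⊆ X \ {u} := fun z hz => ⟨hZX hz, fun h => huS (h ▸ hZS hz)⟩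
  have hdelS : X \ {u} ⊆ S :=
    subset_of_connected_of_subset_compl_setNbhd
      (connected_induce_diff_singleton_of_isBiconnected hXbi huX)
      (hZne.mono (Set.subset_inter hZdel hZS))
      (Set.sdiff_singleton_subset_iff.mpr hXu)
  exact Set.sdiff_singleton_subset_iff.mp hdelS

end ForbiddenSetsThroughZ

theorem maxConnPSet_iff_compl_nbhd_maxPSet_general
    (P : GraphClass) (hiso : P.IsoClosed) (hher : P.Hereditary)
    {V : Type} [Fintype V] (G : SimpleGraph V)
    (Z : Set V) (hZne : Z.Nonempty)
    (hforb : ∀ X : Set V, IsForbiddenSet P G X → Z ⊆ X ∧ IsBiconnected (G.induce X))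
    (S : Set V) (hZS : Z ⊆ S) (hSconn : (G.induce S).Connected) :
    IsMaxConnPSet P G S ↔ IsMaxPSet P G ((setNbhd G S)ᶜ) := by
  constructor
  · rintro ⟨⟨hSP, -⟩, hSmax⟩
    refine ⟨isPSet_compl_setNbhd hiso hher hZne hforb hZS hSP, fun T hWT hTP => ?_⟩
    obtain ⟨v, hvT, hvW⟩ := Set.exists_of_ssubset hWT
    obtain ⟨hvS, s, hs, hadj⟩ := Set.notMem_compl_iff.mp hvW
    have hvST : insert v S ⊆ T := Set.insert_subset hvT ((subset_compl_setNbhd S).trans hWT.subset)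
    exact hSmax _ (Set.ssubset_insert hvS)
      ⟨hiso.isPSet_mono hher hvST hTP, connected_induce_insert hSconn hs hadj⟩
  · rintro ⟨hWP, hWmax⟩
    refine ⟨⟨hiso.isPSet_mono hher (subset_compl_setNbhd S) hWP, hSconn⟩, ?_⟩
    rintro T hST ⟨hTP, hTconn⟩
    obtain ⟨u, huT, huN⟩ := exists_mem_setNbhd_of_ssubset (hZne.mono hZS) hTconn hST
    obtain ⟨X, hXuW, hX⟩ :=
      exists_isForbiddenSet_subset (hWmax _ (Set.ssubset_insert (not_not_intro huN)))
    have hXuS := hX.subset_insert_of_subset_insert_compl_setNbhd hiso hher hZne hforb hZS hWP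
      huN.1 hXuW
    exact hX.not_subset_of_isPSet hiso hher hTP (hXuS.trans (Set.insert_subset huT hST.subset))

/-- Let `P` be a hereditary graph class, `G` a finite connected graph
not in `P`, and `Z` a nonempty set of vertices such that every forbidden set `X` of `G`
contains `Z` and induces a biconnected subgraph.  Then for every `S ⊆ V(G)` with
`Z ⊆ S` and `G[S]` connected: `S` is a maximal connected `P` set of `G` if and only
if `V(G) \ N(S)` is a maximal `P` set of `G`. -/
theorem maxConnPSet_iff_compl_nbhd_maxPSet
    (P : GraphClass) (hne : P.NonemptyClass) (hiso : P.IsoClosed) (hher : P.Hereditary)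
    {V : Type} [Fintype V] (G : SimpleGraph V) (hGconn : G.Connected) (hGP : ¬ P V G)
    (Z : Set V) (hZne : Z.Nonempty)
    (hforb : ∀ X : Set V, IsForbiddenSet P G X → Z ⊆ X ∧ IsBiconnected (G.induce X))
    (S : Set V) (hZS : Z ⊆ S) (hSconn : (G.induce S).Connected) :
    IsMaxConnPSet P G S ↔ IsMaxPSet P G ((setNbhd G S)ᶜ) :=
  maxConnPSet_iff_compl_nbhd_maxPSet_general P hiso hher G Z hZne hforb S hZS hSconn
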